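/- arXiv:1707.00398 — 4 statements merged into one kernel-verified Lean document; each statement's English description precedes it below -/
import Mathlib

section
/- Suppose f : [0,∞) → ℝ is smooth with f'' bounded, |f''| ≤ B. Let u ∈ C³(D) with bounded derivatives u', u'', u''' on D, and let J : [0,1] → [0,M]. Then there exists a constant C, depending only on B, M, f'(0), and the bounds on the derivatives of u, such that for all x ∈ D and all ε > 0: |(2/ε²)∫_{x-ε}^{x+ε} J(|y-x|/ε)[f'(|y-x|S(y,x;u)²) - f'(0)]·S(y,x;u) dy| ≤ C·ε. That is, the difference between the nonlinear peridynamic force -∇PDᵉ(u)(x) and the linearized peridynamic force -∇PDᵉ_l(u)(x) is O(ε) uniformly in x. -/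
/-- Lipschitz estimate from a uniform bound on the derivative. -/
lemma lip_of_deriv_bound (g : ℝ → ℝ) (K : ℝ) (hg : Differentiable ℝ g)
    (hK : ∀ z, |deriv g z| ≤ K) : ∀ a b : ℝ, |g b - g a| ≤ K * |b - a| := by
  intro a b
  have := convex_univ.norm_image_sub_le_of_norm_deriv_le (fun z _ => hg z)
    (fun z _ => by simpa [Real.norm_eq_abs] using hK z)
    (Set.mem_univ a) (Set.mem_univ b)
  simpa [Real.norm_eq_abs] using this

/-- First-order Taylor bound from a Lipschitz bound on the derivative. -/
lemma taylor1_bound (g : ℝ → ℝ) (K : ℝ) (hg : Differentiable ℝ g)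
    (hlip : ∀ a b : ℝ, |deriv g b - deriv g a| ≤ K * |b - a|) :
    ∀ p q : ℝ, |g q - g p - deriv g p * (q - p)| ≤ K * (q - p) ^ 2 := by
  intro p q
  have hgd : Differentiable ℝ (fun t => g t - deriv g p * t) :=
    hg.sub (differentiable_fun_id.const_mul _)
  have hderiv : ∀ t : ℝ, deriv (fun t => g t - deriv g p * t) t
      = deriv g t - deriv g p := by
    intro t
    rw [deriv_fun_sub (hg t) ((differentiable_fun_id.const_mul (deriv g p)) t)]
    rw [deriv_const_mul _ differentiableAt_fun_id, deriv_id'', mul_one]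
  have key := (convex_uIcc p q).norm_image_sub_le_of_norm_deriv_le
    (f := fun t => g t - deriv g p * t) (C := K * |q - p|)
    (fun t _ => hgd t)
    (fun t ht => by
      rw [Real.norm_eq_abs, hderiv t]
      calc |deriv g t - deriv g p| ≤ K * |t - p| := hlip p t
        _ ≤ K * |q - p| := by
            have hK0 : 0 ≤ K := le_trans (abs_nonneg _) (by simpa using hlip 0 1)
            exact mul_le_mul_of_nonneg_left (Set.abs_sub_left_of_mem_uIcc ht) hK0)
    Set.left_mem_uIcc Set.right_mem_uIcc
  have he : (g q - deriv g p * q) - (g p - deriv g p * p)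
      = g q - g p - deriv g p * (q - p) := by ring
  rw [Real.norm_eq_abs, Real.norm_eq_abs, he] at key
  calc |g q - g p - deriv g p * (q - p)| ≤ K * |q - p| * |q - p| := key
    _ = K * (q - p) ^ 2 := by rw [mul_assoc, ← abs_mul, ← sq, abs_sq]

set_option maxHeartbeats 1000000 in
/-- For `f` smooth with `|f''| ≤ B`, `u ∈ C³` with bounded derivatives,
and `J : [0,1] → [0,M]`, there is a constant `C` such that for all `x` and all `ε > 0`
the difference between the nonlinear peridynamic force and the linearized one is `≤ C ε`:
`|(2/ε²)∫_{x-ε}..(x+ε), J(|y-x|/ε)[f'(|y-x| S(y,x;u)²) - f'(0)] S(y,x;u) dy| ≤ C ε`,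
where `S(y,x;u) = (u y - u x)/|y-x|`. -/
theorem stmt_4 (f u J : ℝ → ℝ) (B M K₁ K₂ K₃ : ℝ)
    (hf : ContDiff ℝ (⊤ : ℕ∞) f) (hf'0 : 0 < deriv f 0)
    (hB : ∀ r, |deriv (deriv f) r| ≤ B)
    (hu : ContDiff ℝ 3 u)
    (h1 : ∀ z, |deriv u z| ≤ K₁)
    (h2 : ∀ z, |iteratedDeriv 2 u z| ≤ K₂)
    (h3 : ∀ z, |iteratedDeriv 3 u z| ≤ K₃)
    (hJ0 : ∀ r, 0 ≤ J r) (hJM : ∀ r, J r ≤ M)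
    (hJsupp : ∀ r, r ∉ Set.Icc (0 : ℝ) 1 → J r = 0) :
    ∃ C > 0, ∀ (x : ℝ), ∀ ε > 0,
      abs ((2 / ε ^ 2) * ∫ y in (x - ε)..(x + ε),
          J (|y - x| / ε) *
            ((deriv f (|y - x| * ((u y - u x) / |y - x|) ^ 2) - deriv f 0) *
              ((u y - u x) / |y - x|))) ≤ C * ε := by
  have hM : 0 ≤ M := le_trans (hJ0 0) (hJM 0)
  have hB0 : 0 ≤ B := le_trans (abs_nonneg _) (hB 0)
  have hK1 : 0 ≤ K₁ := le_trans (abs_nonneg _) (h1 0)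
  have hK2 : 0 ≤ K₂ := le_trans (abs_nonneg _) (h2 0)
  have hu_diff : Differentiable ℝ u := hu.differentiable (by norm_num)
  have hulip : ∀ a b : ℝ, |u b - u a| ≤ K₁ * |b - a| :=
    lip_of_deriv_bound u K₁ hu_diff h1
  -- the derivative of f is B-Lipschitz
  have hfinf : ContDiff ℝ ((⊤ : ℕ∞) : WithTop ℕ∞) f := hf.of_le (by simp)
  have hf'cd : ContDiff ℝ ((⊤ : ℕ∞) : WithTop ℕ∞) (deriv f) :=
    (contDiff_infty_iff_deriv.mp hfinf).2
  have hf'lip : ∀ a b : ℝ, |deriv f b - deriv f a| ≤ B * |b - a| :=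
    lip_of_deriv_bound (deriv f) B (hf'cd.differentiable (by norm_num)) hB
  -- the derivative of u is K₂-Lipschitz, hence a Taylor bound
  have hu'cd : ContDiff ℝ 2 (deriv u) := by
    have h := hu
    rw [show (3 : WithTop ℕ∞) = 2 + 1 by norm_num] at h
    exact (contDiff_succ_iff_deriv.mp h).2.2
  have h2' : ∀ z, |deriv (deriv u) z| ≤ K₂ := by
    intro z
    have e : iteratedDeriv 2 u = deriv (deriv u) := by
      rw [show (2 : ℕ) = 1 + 1 from rfl, iteratedDeriv_succ, iteratedDeriv_one]
    have := h2 z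
    rwa [e] at this
  have hu'lip : ∀ a b : ℝ, |deriv u b - deriv u a| ≤ K₂ * |b - a| :=
    lip_of_deriv_bound (deriv u) K₂ (hu'cd.differentiable (by norm_num)) h2'
  have utaylor : ∀ p q : ℝ, |u q - u p - deriv u p * (q - p)| ≤ K₂ * (q - p) ^ 2 :=
    taylor1_bound u K₂ hu_diff hu'lip
  refine ⟨12 * M * B * K₁ ^ 2 * K₂ + 1, by positivity, ?_⟩
  intro x ε hε
  set D := 6 * M * B * K₁ ^ 2 * K₂ with hD
  have hD0 : 0 ≤ D := by positivity
  set G : ℝ → ℝ := fun y =>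
    J (|y - x| / ε) *
      ((deriv f (|y - x| * ((u y - u x) / |y - x|) ^ 2) - deriv f 0) *
        ((u y - u x) / |y - x|)) with hG
  by_cases hint : IntervalIntegrable G MeasureTheory.volume (x - ε) (x + ε)
  · -- integrable case
    have hxl : x - ε ≤ x := by linarith
    have hxr : x ≤ x + ε := by linarith
    have hmem : x ∈ Set.uIcc (x - ε) (x + ε) := by
      rw [Set.uIcc_of_le (by linarith)]
      exact ⟨by linarith, by linarith⟩
    have I2 : IntervalIntegrable G MeasureTheory.volume (x - ε) x :=
      hint.mono_set (Set.uIcc_subset_uIcc Set.left_mem_uIcc hmem)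
    have I1 : IntervalIntegrable G MeasureTheory.volume x (x + ε) :=
      hint.mono_set (Set.uIcc_subset_uIcc hmem Set.right_mem_uIcc)
    have hsplit : (∫ y in (x - ε)..(x + ε), G y)
        = (∫ y in (x - ε)..x, G y) + ∫ y in x..(x + ε), G y :=
      (intervalIntegral.integral_add_adjacent_intervals I2 I1).symm
    have e1 : (∫ h in (0:ℝ)..ε, G (h + x)) = ∫ y in x..(x + ε), G y := by
      rw [intervalIntegral.integral_comp_add_right, zero_add, add_comm ε x]
    have e2 : (∫ h in (0:ℝ)..ε, G (x - h)) = ∫ y in (x - ε)..x, G y := by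
      rw [intervalIntegral.integral_comp_sub_left, sub_zero]
    have J1 : IntervalIntegrable (fun h => G (h + x)) MeasureTheory.volume 0 ε := by
      have := I1.comp_add_right x
      simpa using this
    have J2 : IntervalIntegrable (fun h => G (x - h)) MeasureTheory.volume 0 ε := by
      have := (I2.comp_sub_left x).symm
      simpa using this
    have hsum : (∫ y in (x - ε)..(x + ε), G y)
        = ∫ h in (0:ℝ)..ε, (G (x - h) + G (h + x)) := by
      rw [hsplit, ← e1, ← e2, ← intervalIntegral.integral_add J2 J1]
    -- the key symmetric pointwise bound
    have key : ∀ h ∈ Set.uIoc (0:ℝ) ε, ‖G (x - h) + G (h + x)‖ ≤ D * ε ^ 2 := by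
      intro h hh
      rw [Set.uIoc_of_le hε.le] at hh
      obtain ⟨hh0, hhε⟩ := hh
      have hab1 : |x - h - x| = h := by
        rw [show x - h - x = -h by ring, abs_neg, abs_of_pos hh0]
      have hab2 : |h + x - x| = h := by
        rw [show h + x - x = h by ring, abs_of_pos hh0]
      set a := (u (h + x) - u x) / h with ha_def
      set c := (u (x - h) - u x) / h with hc_def
      have hhne : h ≠ 0 := ne_of_gt hh0
      have ha : |a| ≤ K₁ := by
        rw [ha_def, abs_div, abs_of_pos hh0, div_le_iff₀ hh0]
        calc |u (h + x) - u x| ≤ K₁ * |h + x - x| := hulip x (h + x)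
          _ = K₁ * h := by rw [hab2]
      have hc : |c| ≤ K₁ := by
        rw [hc_def, abs_div, abs_of_pos hh0, div_le_iff₀ hh0]
        calc |u (x - h) - u x| ≤ K₁ * |x - h - x| := hulip x (x - h)
          _ = K₁ * h := by rw [hab1]
      have hac : |a + c| ≤ 2 * K₂ * h := by
        have t1 := utaylor x (h + x)
        have t2 := utaylor x (x - h)
        rw [show h + x - x = h by ring] at t1
        rw [show x - h - x = -h by ring] at t2
        have hnum : |u (h + x) + u (x - h) - 2 * u x| ≤ 2 * K₂ * h ^ 2 := by
          rw [abs_le] at t1 t2 ⊢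
          constructor <;> nlinarith [t1.1, t1.2, t2.1, t2.2]
        have hac_eq : a + c = (u (h + x) + u (x - h) - 2 * u x) / h := by
          rw [ha_def, hc_def, ← add_div]; ring_nf
        rw [hac_eq, abs_div, abs_of_pos hh0, div_le_iff₀ hh0]
        calc |u (h + x) + u (x - h) - 2 * u x| ≤ 2 * K₂ * h ^ 2 := hnum
          _ = 2 * K₂ * h * h := by ring
      have hacd : |a - c| ≤ 2 * K₁ := by
        rw [abs_le] at ha hc ⊢
        constructor <;> linarith [ha.1, ha.2, hc.1, hc.2]
      -- bound on E := (f'(hc²) - f'(0))·c + (f'(ha²) - f'(0))·a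
      have hP : |deriv f (h * a ^ 2) - deriv f (h * c ^ 2)|
          ≤ B * (h * (2 * K₂ * h * (2 * K₁))) := by
        refine le_trans (hf'lip (h * c ^ 2) (h * a ^ 2)) ?_
        have habs1 : |h * a ^ 2 - h * c ^ 2| = h * (|a + c| * |a - c|) := by
          rw [show h * a ^ 2 - h * c ^ 2 = h * ((a + c) * (a - c)) by ring,
            abs_mul, abs_mul, abs_of_pos hh0]
        rw [habs1]
        apply mul_le_mul_of_nonneg_left _ hB0
        apply mul_le_mul_of_nonneg_left _ hh0.le
        exact mul_le_mul hac hacd (abs_nonneg _) (by positivity)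
      have hQ : |deriv f (h * c ^ 2) - deriv f 0| ≤ B * (h * K₁ ^ 2) := by
        refine le_trans (hf'lip 0 (h * c ^ 2)) ?_
        rw [sub_zero, abs_mul, abs_of_pos hh0, abs_pow]
        apply mul_le_mul_of_nonneg_left _ hB0
        apply mul_le_mul_of_nonneg_left _ hh0.le
        calc |c| ^ 2 ≤ K₁ ^ 2 := pow_le_pow_left₀ (abs_nonneg c) hc 2
          _ = K₁ ^ 2 := rfl
      have hE : |(deriv f (h * c ^ 2) - deriv f 0) * c
            + (deriv f (h * a ^ 2) - deriv f 0) * a|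
          ≤ 6 * B * K₁ ^ 2 * K₂ * h ^ 2 := by
        have heq : (deriv f (h * c ^ 2) - deriv f 0) * c
              + (deriv f (h * a ^ 2) - deriv f 0) * a
            = (deriv f (h * a ^ 2) - deriv f (h * c ^ 2)) * a
              + (deriv f (h * c ^ 2) - deriv f 0) * (a + c) := by ring
        rw [heq]
        calc |(deriv f (h * a ^ 2) - deriv f (h * c ^ 2)) * a
              + (deriv f (h * c ^ 2) - deriv f 0) * (a + c)|
            ≤ |(deriv f (h * a ^ 2) - deriv f (h * c ^ 2)) * a|
              + |(deriv f (h * c ^ 2) - deriv f 0) * (a + c)| := abs_add_le _ _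
          _ = |deriv f (h * a ^ 2) - deriv f (h * c ^ 2)| * |a|
              + |deriv f (h * c ^ 2) - deriv f 0| * |a + c| := by
                rw [abs_mul, abs_mul]
          _ ≤ (B * (h * (2 * K₂ * h * (2 * K₁)))) * K₁
              + (B * (h * K₁ ^ 2)) * (2 * K₂ * h) := by
                exact add_le_add
                  (mul_le_mul hP ha (abs_nonneg _) (by positivity))
                  (mul_le_mul hQ hac (abs_nonneg _) (by positivity))
          _ = 6 * B * K₁ ^ 2 * K₂ * h ^ 2 := by ring
      -- assemble
      have hGsum : G (x - h) + G (h + x)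
          = J (h / ε) * ((deriv f (h * c ^ 2) - deriv f 0) * c
            + (deriv f (h * a ^ 2) - deriv f 0) * a) := by
        rw [hG]
        simp only [hab1, hab2, ← ha_def, ← hc_def]
        ring
      rw [hGsum, Real.norm_eq_abs, abs_mul, abs_of_nonneg (hJ0 _)]
      calc J (h / ε) * |(deriv f (h * c ^ 2) - deriv f 0) * c
            + (deriv f (h * a ^ 2) - deriv f 0) * a|
          ≤ M * (6 * B * K₁ ^ 2 * K₂ * h ^ 2) :=
            mul_le_mul (hJM _) hE (abs_nonneg _) hM
        _ ≤ M * (6 * B * K₁ ^ 2 * K₂ * ε ^ 2) := by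
            have hsq : h ^ 2 ≤ ε ^ 2 := by nlinarith
            have hstep : 6 * B * K₁ ^ 2 * K₂ * h ^ 2 ≤ 6 * B * K₁ ^ 2 * K₂ * ε ^ 2 :=
              mul_le_mul_of_nonneg_left hsq (by positivity)
            exact mul_le_mul_of_nonneg_left hstep hM
        _ = D * ε ^ 2 := by rw [hD]; ring
    have hI := intervalIntegral.norm_integral_le_of_norm_le_const key
    rw [sub_zero, abs_of_pos hε] at hI
    rw [hsum]
    rw [abs_mul, abs_of_pos (show (0:ℝ) < 2 / ε ^ 2 by positivity)]
    calc 2 / ε ^ 2 * |∫ h in (0:ℝ)..ε, (G (x - h) + G (h + x))|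
        ≤ 2 / ε ^ 2 * (D * ε ^ 2 * ε) :=
          mul_le_mul_of_nonneg_left hI (by positivity)
      _ = 2 * D * ε := by field_simp
      _ ≤ (12 * M * B * K₁ ^ 2 * K₂ + 1) * ε := by rw [hD]; nlinarith
  · -- non-integrable case: the interval integral is zero
    rw [intervalIntegral.integral_undef hint]
    simp only [mul_zero, abs_zero]
    positivity
end

section
/- Let u ∈ C³(D) with |u'''| ≤ C₁ on D. Then there is a constant C, depending only on C₁, M, and f'(0), such that for all x ∈ D whose ε-neighborhood lies in D: |(2/ε²)∫_{x-ε}^{x+ε} J(|y-x|/ε) f'(0) S(y,x;u) dy - 𝔽·u''(x)| ≤ C·ε, where 𝔽 = ∫_{-1}^1 J(|z|) f'(0)|z| dz. That is, the linearized peridynamic force converges to the local elastic force 𝔽 u_{xx} at rate O(ε). -/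
/-!
Substituting `y = x + ε z` and symmetrizing under `z ↦ -z` turns the peridynamic force into
`∫_{-1}^1 W(|z|) |z| ρ(z) dz`, where `ρ(z)` is the symmetric second difference quotient of `u`
at `x` with step `ε z`. Taylor's theorem gives `|ρ(z) - u''(x)| ≤ 2 C₁ ε |z|`, and integrating
against the bounded weight `W(|z|) |z|`, whose integral is `𝔽`, gives the `O(ε)` bound.

The kernel is not assumed measurable, so either integral may be the junk value `0`. The estimate
survives: if the weight is not a.e. measurable but its product with `ρ` is, then `ρ` vanishes
somewhere, which forces `|u''(x)| ≤ 2 C₁ ε`.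
-/

open Set MeasureTheory Filter

lemma abs_le_mul_abs_pow_succ_of_hasDerivAt {f f' : ℝ → ℝ} {K : ℝ} {n : ℕ} (h₀ : f 0 = 0)
    (hf : ∀ s, HasDerivAt f (f' s) s) (hf' : ∀ s, |f' s| ≤ K * |s| ^ n) (t : ℝ) :
    |f t| ≤ K * |t| ^ (n + 1) := by
  have hK : 0 ≤ K := by simpa using (abs_nonneg _).trans (hf' 1)
  have hbound : ∀ s ∈ uIcc 0 t, ‖f' s‖ ≤ K * |t| ^ n := fun s hs => by
    refine (hf' s).trans (mul_le_mul_of_nonneg_left (pow_le_pow_left₀ (abs_nonneg s) ?_ n) hK)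
    simpa using abs_sub_left_of_mem_uIcc hs
  have := (convex_uIcc 0 t).norm_image_sub_le_of_norm_hasDerivWithin_le
    (fun s _ => (hf s).hasDerivWithinAt) hbound left_mem_uIcc right_mem_uIcc
  simpa [h₀, pow_succ, mul_assoc] using this

lemma abs_add_sub_two_mul_sub_sq_mul_le {u : ℝ → ℝ} {C₁ : ℝ} (hu : ContDiff ℝ 3 u)
    (hC₁ : ∀ z, |iteratedDeriv 3 u z| ≤ C₁) (x t : ℝ) :
    |u (x + t) + u (x - t) - 2 * u x - t ^ 2 * deriv (deriv u) x| ≤ 2 * C₁ * |t| ^ 3 := by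
  have hd : ∀ k < 3, ∀ y, HasDerivAt (deriv^[k] u) (deriv^[k + 1] u y) y := fun k hk y => by
    rw [Function.iterate_succ_apply', ← iteratedDeriv_eq_iterate]
    exact (hu.differentiable_iteratedDeriv k (by exact_mod_cast hk) y).hasDerivAt
  have hd₀ : ∀ y, HasDerivAt u (deriv u y) y := hd 0 (by norm_num)
  have hd₁ : ∀ y, HasDerivAt (deriv u) (deriv (deriv u) y) y := hd 1 (by norm_num)
  have hd₂ : ∀ y, HasDerivAt (deriv (deriv u)) (deriv^[3] u y) y := hd 2 (by norm_num)
  rw [iteratedDeriv_eq_iterate] at hC₁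
  set u₂ := deriv (deriv u) x
  have h₂ : ∀ s, |deriv (deriv u) (x + s) + deriv (deriv u) (x - s) - 2 * u₂|
      ≤ 2 * C₁ * |s| ^ (0 + 1) := by
    refine abs_le_mul_abs_pow_succ_of_hasDerivAt (by simp only [add_zero, sub_zero]; ring)
      (fun s => (((hd₂ _).comp_const_add x s).add ((hd₂ _).comp_const_sub x s)).sub_const _)
      fun s => ?_
    rw [pow_zero, mul_one, ← sub_eq_add_neg, two_mul]
    exact (abs_sub _ _).trans (add_le_add (hC₁ _) (hC₁ _))
  have h₁ : ∀ s, |deriv u (x + s) - deriv u (x - s) - 2 * s * u₂| ≤ 2 * C₁ * |s| ^ (1 + 1) := by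
    refine abs_le_mul_abs_pow_succ_of_hasDerivAt (by simp only [add_zero, sub_zero]; ring)
      (fun s => ?_) h₂
    exact ((((hd₁ _).comp_const_add x s).sub ((hd₁ _).comp_const_sub x s)).sub
      (((hasDerivAt_id' s).const_mul 2).mul_const u₂)).congr_deriv (by ring)
  refine abs_le_mul_abs_pow_succ_of_hasDerivAt
    (f := fun s => u (x + s) + u (x - s) - 2 * u x - s ^ 2 * u₂) ?_ (fun s => ?_) h₁ t
  · simp only [add_zero, sub_zero]; ring
  exact (((((hd₀ _).comp_const_add x s).add ((hd₀ _).comp_const_sub x s)).sub_const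
    (2 * u x)).sub ((hasDerivAt_pow 2 s).mul_const u₂)).congr_deriv (by ring)

lemma abs_integral_mul_sub_mul_integral_le {α : Type*} [MeasurableSpace α] {μ : Measure α}
    [IsFiniteMeasure μ] {h ρ : α → ℝ} {c δ K : ℝ} (hρ : AEMeasurable ρ μ)
    (hh : ∀ᵐ a ∂μ, |h a| ≤ K) (hρc : ∀ᵐ a ∂μ, |ρ a - c| ≤ δ) :
    |∫ a, h a * ρ a ∂μ - c * ∫ a, h a ∂μ| ≤ 2 * K * δ * μ.real univ := by
  rcases eq_zero_or_neZero μ with rfl | hμ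
  · simp
  obtain ⟨a, haK, haδ⟩ := (hh.and hρc).exists
  have hK : 0 ≤ K := (abs_nonneg _).trans haK
  have hδ : 0 ≤ δ := (abs_nonneg _).trans haδ
  have hρ_le : ∀ᵐ a ∂μ, ‖h a * ρ a‖ ≤ K * (|c| + δ) := by
    filter_upwards [hh, hρc] with a ha hac
    rw [Real.norm_eq_abs, abs_mul]
    exact mul_le_mul ha (by linarith [abs_sub_abs_le_abs_sub (ρ a) c]) (abs_nonneg _) hK
  by_cases hhm : AEStronglyMeasurable h μ
  · have hhi : Integrable h μ := .of_bound hhm K hh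
    have hhρi : Integrable (fun a => h a * ρ a) μ :=
      .of_bound (hhm.mul hρ.aestronglyMeasurable) _ hρ_le
    rw [← integral_const_mul, ← integral_sub hhρi (hhi.const_mul c)]
    calc ‖∫ a, h a * ρ a - c * h a ∂μ‖ ≤ K * δ * μ.real univ := by
          refine norm_integral_le_of_norm_le_const ?_
          filter_upwards [hh, hρc] with a ha hac
          rw [Real.norm_eq_abs, ← mul_comm (h a), ← mul_sub, abs_mul]
          exact mul_le_mul ha hac (abs_nonneg _) hK
      _ ≤ 2 * K * δ * μ.real univ := by
          have := mul_nonneg (mul_nonneg hK hδ) (measureReal_nonneg (μ := μ) (s := univ))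
          linarith
  rw [integral_undef (fun hi => hhm hi.1), mul_zero, sub_zero]
  by_cases hhρm : AEStronglyMeasurable (fun a => h a * ρ a) μ
  · have hρ0 : ∃ᵐ a ∂μ, ρ a = 0 := by
      by_contra hne
      rw [not_frequently] at hne
      exact hhm ((hhρm.mul hρ.inv.aestronglyMeasurable).congr
        (hne.mono fun a ha => by simp [mul_assoc, mul_inv_cancel₀ ha]))
    obtain ⟨a, ha0, hac⟩ := (hρ0.and_eventually hρc).exists
    have hc : |c| ≤ δ := by simpa [ha0] using hac
    calc ‖∫ a, h a * ρ a ∂μ‖ ≤ K * (|c| + δ) * μ.real univ :=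
          norm_integral_le_of_norm_le_const hρ_le
      _ ≤ 2 * K * δ * μ.real univ := by
          gcongr ?_ * _
          nlinarith
  · rw [integral_undef (fun hi => hhρm hi.1), abs_zero]
    positivity

lemma integral_eq_integral_add_comp_neg_div_two {f : ℝ → ℝ} {a : ℝ}
    (hf : IntervalIntegrable f volume (-a) a) :
    ∫ z in (-a)..a, f z = ∫ z in (-a)..a, (f z + f (-z)) / 2 := by
  have hneg : IntervalIntegrable (fun z => f (-z)) volume (-a) a := by
    simpa using (IntervalIntegrable.iff_comp_neg (by simp)).mp hf.symm
  rw [intervalIntegral.integral_div, intervalIntegral.integral_add hf hneg,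
    intervalIntegral.integral_comp_neg, neg_neg]
  ring

lemma integral_kernel_slope_eq (u W : ℝ → ℝ) (x : ℝ) {ε : ℝ} (hε : 0 < ε) :
    ∫ y in (x - ε)..(x + ε), W (|y - x| / ε) * ((u y - u x) / |y - x|)
      = ε * ∫ z in (-1)..1, W |z| * ((u (x + ε * z) - u x) / (ε * |z|)) := by
  have := intervalIntegral.integral_comp_add_mul
    (fun y => W (|y - x| / ε) * ((u y - u x) / |y - x|)) (a := -1) (b := 1) hε.ne' x
  simp only [add_sub_cancel_left, abs_mul, abs_of_pos hε, mul_div_cancel_left₀ _ hε.ne'] at this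
  rw [this, smul_eq_mul, mul_inv_cancel_left₀ hε.ne', mul_neg_one, ← sub_eq_add_neg, mul_one]

lemma intervalIntegrable_kernel_slope {u W : ℝ → ℝ} {K : ℝ} (hu : ContDiff ℝ 1 u)
    (hW : ∀ r ∈ Icc (0 : ℝ) 1, |W r| ≤ K)
    (hWi : IntervalIntegrable (fun z => W |z| * |z|) volume (-1) 1) (x : ℝ) {ε : ℝ}
    (hε : 0 < ε) :
    IntervalIntegrable (fun z => W |z| * ((u (x + ε * z) - u x) / (ε * |z|))) volume (-1) 1 := by
  obtain ⟨L, hL⟩ := hu.contDiffOn.exists_lipschitzOnWith one_ne_zero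
    (convex_Icc (x - ε) (x + ε)) isCompact_Icc
  have hK : 0 ≤ K := (abs_nonneg _).trans (hW 0 (by simp))
  have hum : Measurable u := hu.continuous.measurable
  have hfactor : (fun z => W |z| * ((u (x + ε * z) - u x) / (ε * |z|)))
      = fun z => W |z| * |z| * ((u (x + ε * z) - u x) / (ε * |z| * |z|)) := by
    ext z
    rcases eq_or_ne z 0 with rfl | hz
    · simp
    · field_simp
  refine (intervalIntegrable_const (c := K * L)).mono_fun' ?_ ?_
  · rw [hfactor]
    exact (intervalIntegrable_iff.mp hWi).aestronglyMeasurable.mul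
      (by fun_prop : Measurable _).aestronglyMeasurable
  refine ae_restrict_of_forall_mem measurableSet_uIoc fun z hz => ?_
  rw [uIoc_of_le (by norm_num)] at hz
  have hz1 : |z| ≤ 1 := abs_le.mpr ⟨hz.1.le, hz.2⟩
  rcases eq_or_ne z 0 with rfl | hz0
  · simpa using mul_nonneg hK L.2
  have hεz : 0 < ε * |z| := by positivity
  have hslope : |u (x + ε * z) - u x| ≤ L * (ε * |z|) := by
    have hmem : ∀ s, |s| ≤ 1 → x + ε * s ∈ Icc (x - ε) (x + ε) := fun s hs => by
      have := abs_le.mp hs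
      constructor <;> nlinarith
    have hx := hmem 0 (by simp)
    rw [mul_zero, add_zero] at hx
    simpa [Real.dist_eq, abs_mul, abs_of_pos hε] using hL.dist_le_mul _ (hmem z hz1) _ hx
  change |_| ≤ K * L
  rw [abs_mul, abs_div, abs_of_pos hεz]
  exact mul_le_mul (hW _ ⟨abs_nonneg z, hz1⟩) ((div_le_iff₀ hεz).mpr hslope)
    (by positivity) hK

theorem abs_peridynamic_force_sub_elastic_force_le {u W : ℝ → ℝ} {C₁ K : ℝ} (hu : ContDiff ℝ 3 u)
    (hC₁ : ∀ z, |iteratedDeriv 3 u z| ≤ C₁) (hW : ∀ r ∈ Icc (0 : ℝ) 1, |W r| ≤ K) (x : ℝ)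
    {ε : ℝ} (hε : 0 < ε) :
    |(2 / ε ^ 2) * (∫ y in (x - ε)..(x + ε), W (|y - x| / ε) * ((u y - u x) / |y - x|))
      - (∫ z in (-1 : ℝ)..1, W |z| * |z|) * deriv (deriv u) x| ≤ 8 * K * C₁ * ε := by
  have hK : 0 ≤ K := (abs_nonneg _).trans (hW 0 (by simp))
  have hC₁0 : 0 ≤ C₁ := (abs_nonneg _).trans (hC₁ 0)
  rw [integral_kernel_slope_eq u W x hε]
  set A := fun z => W |z| * ((u (x + ε * z) - u x) / (ε * |z|))
  by_cases hA : IntervalIntegrable A volume (-1) 1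
  swap
  · have hWi : ¬ IntervalIntegrable (fun z => W |z| * |z|) volume (-1) 1 :=
      fun hWi => hA (intervalIntegrable_kernel_slope (hu.of_le (by norm_num)) hW hWi x hε)
    rw [intervalIntegral.integral_undef hA, intervalIntegral.integral_undef hWi]
    simp only [mul_zero, zero_mul, sub_zero, abs_zero]
    positivity
  set ρ := fun z => (u (x + ε * z) + u (x - ε * z) - 2 * u x) / (ε * z) ^ 2
  have hsymm : (2 / ε ^ 2) * (ε * ∫ z in (-1)..1, A z)
      = ∫ z in (-1)..1, W |z| * |z| * ρ z := by
    rw [integral_eq_integral_add_comp_neg_div_two hA, ← mul_assoc,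
      ← intervalIntegral.integral_const_mul]
    congr 1
    ext z
    rcases eq_or_ne z 0 with rfl | hz
    · simp [A, ρ]
    · simp only [A, ρ, abs_neg, mul_neg, ← sub_eq_add_neg, mul_pow, ← sq_abs z]
      field_simp
      ring
  have hρ : ∀ᵐ z ∂volume.restrict (Ioc (-1 : ℝ) 1), |ρ z - deriv (deriv u) x| ≤ 2 * C₁ * ε := by
    filter_upwards [ae_restrict_mem measurableSet_Ioc, ae_restrict_of_ae (volume.ae_ne 0)]
      with z hz hz0
    have hz1 : |z| ≤ 1 := abs_le.mpr ⟨hz.1.le, hz.2⟩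
    have hεz : 0 < (ε * z) ^ 2 := by positivity
    rw [div_sub' hεz.ne', abs_div, abs_of_pos hεz, div_le_iff₀ hεz]
    calc _ ≤ 2 * C₁ * |ε * z| ^ 3 := by
          simpa [mul_comm] using abs_add_sub_two_mul_sub_sq_mul_le hu hC₁ x (ε * z)
      _ ≤ 2 * C₁ * ε * (ε * z) ^ 2 := by
          rw [← sq_abs (ε * z), abs_mul, abs_of_pos hε, pow_succ, ← mul_assoc]
          have := mul_le_mul_of_nonneg_left (mul_le_of_le_one_right hε.le hz1)
            (by positivity : 0 ≤ 2 * C₁ * (ε * |z|) ^ 2)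
          linarith
  have hWz : ∀ᵐ z ∂volume.restrict (Ioc (-1 : ℝ) 1), abs (W |z| * |z|) ≤ K := by
    filter_upwards [ae_restrict_mem measurableSet_Ioc] with z hz
    have hz1 : |z| ≤ 1 := abs_le.mpr ⟨hz.1.le, hz.2⟩
    rw [abs_mul, abs_abs]
    simpa using mul_le_mul (hW _ ⟨abs_nonneg z, hz1⟩) hz1 (abs_nonneg z) hK
  have hum : Measurable u := hu.continuous.measurable
  rw [hsymm, intervalIntegral.integral_of_le (by norm_num),
    intervalIntegral.integral_of_le (by norm_num), mul_comm _ (deriv (deriv u) x)]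
  calc _ ≤ 2 * K * (2 * C₁ * ε) * (volume.restrict (Ioc (-1 : ℝ) 1)).real univ :=
        abs_integral_mul_sub_mul_integral_le (by fun_prop) hWz hρ
    _ = 8 * K * C₁ * ε := by
        simp only [measureReal_restrict_apply_univ, Real.volume_real_Ioc]
        norm_num
        ring

theorem stmt_5_general (u J : ℝ → ℝ) (C₁ M f'0 : ℝ)
    (hu : ContDiff ℝ 3 u)
    (hC₁ : ∀ z, |iteratedDeriv 3 u z| ≤ C₁)
    (hJ0 : ∀ r, 0 ≤ J r) (hJM : ∀ r, J r ≤ M) :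
    ∃ C > 0, ∀ (x : ℝ), ∀ ε > 0,
      abs ((2 / ε ^ 2) * (∫ y in (x - ε)..(x + ε),
            J (|y - x| / ε) * f'0 * ((u y - u x) / |y - x|))
          - (∫ z in (-1 : ℝ)..1, J |z| * f'0 * |z|) * deriv (deriv u) x) ≤ C * ε := by
  have hM : 0 ≤ M := (hJ0 0).trans (hJM 0)
  have hC₁0 : 0 ≤ C₁ := (abs_nonneg _).trans (hC₁ 0)
  have hW : ∀ r ∈ Icc (0 : ℝ) 1, |J r * f'0| ≤ M * |f'0| := fun r _ => by
    rw [abs_mul, abs_of_nonneg (hJ0 r)]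
    exact mul_le_mul_of_nonneg_right (hJM r) (abs_nonneg _)
  refine ⟨8 * (M * |f'0|) * C₁ + 1, by positivity, fun x ε hε => ?_⟩
  calc _ ≤ 8 * (M * |f'0|) * C₁ * ε :=
        abs_peridynamic_force_sub_elastic_force_le (W := fun r => J r * f'0) hu hC₁ hW x hε
    _ ≤ (8 * (M * |f'0|) * C₁ + 1) * ε := by linarith

/-- For `u ∈ C³` with `|u'''| ≤ C₁`, there is a constant `C` (depending only
on `C₁`, `M`, `f'(0)`) such that for all `x` and all `ε > 0`, the linearized peridynamic
force is within `C ε` of the local elastic force `𝔽 u''(x)`: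
`|(2/ε²)∫_{x-ε}^{x+ε} J(|y-x|/ε) f'(0) S(y,x;u) dy - 𝔽 u''(x)| ≤ C ε`,
where `𝔽 = ∫_{-1}^1 J(|z|) f'(0) |z| dz` and `S(y,x;u) = (u y - u x)/|y-x|`. -/
theorem stmt_5 (u J : ℝ → ℝ) (C₁ M f'0 : ℝ) (hf'0 : 0 < f'0)
    (hu : ContDiff ℝ 3 u)
    (hC₁ : ∀ z, |iteratedDeriv 3 u z| ≤ C₁)
    (hJ0 : ∀ r, 0 ≤ J r) (hJM : ∀ r, J r ≤ M)
    (hJsupp : ∀ r, r ∉ Set.Icc (0 : ℝ) 1 → J r = 0) :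
    ∃ C > 0, ∀ (x : ℝ), ∀ ε > 0,
      abs ((2 / ε ^ 2) * (∫ y in (x - ε)..(x + ε),
            J (|y - x| / ε) * f'0 * ((u y - u x) / |y - x|))
          - (∫ z in (-1 : ℝ)..1, J |z| * f'0 * |z|) * deriv (deriv u) x) ≤ C * ε :=
  stmt_5_general u J C₁ M f'0 hu hC₁ hJ0 hJM
end

section
/- Let u ∈ C⁴(D) with |u''''| ≤ C₁ on D. Then there is a constant C, depending only on C₁, M, and f'(0), such that for all x ∈ D whose ε-neighborhood lies in D: |(2/ε²)∫_{x-ε}^{x+ε} J(|y-x|/ε) f'(0) S(y,x;u) dy - 𝔽·u''(x)| ≤ C·ε². The improvement from O(ε) to O(ε²) comes from the vanishing of the odd third-order term in the symmetric integral. -/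
/-!
Put `y = x + t`. The kernel `k t = J (|t| / ε)` is even, so pairing `t` with `-t` turns twice the
force integral into `∫ Φ t * ρ t`, where `Φ t = k t * |t|` and
`ρ t = (u (x + t) + u (x - t) - 2 u x) / t²`, while `∫ Φ = ε² ∫_{-1}^1 J |z| |z| dz`. The odd
terms of the third-order Taylor expansions of `u` at `x ± t` cancel, so
`|ρ t - u'' x| ≤ C₁ t² / 12`, which makes the error `O(ε²)`.

`J` need not be measurable, so these integrals may be Lean's junk value `0`; the comparison of
`∫ Φ ρ` with `u'' x ∫ Φ` has to survive that case too.
-/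

open MeasureTheory Set intervalIntegral
open scoped Interval Nat

theorem abs_sub_taylor_sum_le {f : ℝ → ℝ} {n : ℕ} {C : ℝ} (hf : ContDiff ℝ (n + 1) f)
    (hC : ∀ z, |iteratedDeriv (n + 1) f z| ≤ C) (x t : ℝ) :
    |f (x + t) - ∑ k ∈ Finset.range (n + 1), iteratedDeriv k f x / k ! * t ^ k|
      ≤ C * |t| ^ (n + 1) / (n + 1)! := by
  rcases eq_or_ne t 0 with rfl | ht
  · simp [Finset.sum_range_succ']
  have hx : x ≠ x + t := by simpa [eq_comm] using ht
  obtain ⟨ξ, -, hξ⟩ := taylor_mean_remainder_lagrange_iteratedDeriv hx hf.contDiffOn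
  have hcoeff : ∀ k ∈ Finset.range (n + 1),
      ((k ! : ℝ)⁻¹ * (x + t - x) ^ k) • iteratedDerivWithin k f (uIcc x (x + t)) x
        = iteratedDeriv k f x / k ! * t ^ k := fun k hk => by
    rw [iteratedDerivWithin_eq_iteratedDeriv (uniqueDiffOn_uIcc hx)
      (hf.of_le (by exact_mod_cast (Finset.mem_range.1 hk).le)).contDiffAt left_mem_uIcc,
      add_sub_cancel_left, smul_eq_mul]
    ring
  rw [taylor_within_apply, Finset.sum_congr rfl hcoeff, add_sub_cancel_left] at hξ
  rw [hξ, abs_div, abs_mul, abs_pow, abs_of_pos (by positivity : (0 : ℝ) < (n + 1)!)]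
  gcongr
  exact hC ξ

theorem abs_add_sub_two_mul_sub_iteratedDeriv_two_le {u : ℝ → ℝ} {C : ℝ}
    (hu : ContDiff ℝ 4 u) (hC : ∀ z, |iteratedDeriv 4 u z| ≤ C) (x t : ℝ) :
    |u (x + t) + u (x - t) - 2 * u x - iteratedDeriv 2 u x * t ^ 2| ≤ C * t ^ 4 / 12 := by
  have hplus := abs_sub_taylor_sum_le (n := 3) hu hC x t
  have hminus := abs_sub_taylor_sum_le (n := 3) hu hC x (-t)
  simp only [Finset.sum_range_succ, Finset.sum_range_zero, ← sub_eq_add_neg, abs_neg,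
    (by decide : Even 4).pow_abs] at hplus hminus
  norm_num [Nat.factorial] at hplus hminus
  rw [abs_le] at *
  constructor <;> linarith [hplus.1, hplus.2, hminus.1, hminus.2]

theorem abs_integral_mul_sub_mul_integral_le_s6 {Φ ρ : ℝ → ℝ} {a b c B δ : ℝ}
    (hρ : Measurable ρ) (hΦ : ∀ t ∈ Ι a b, |Φ t| ≤ B) (hρc : ∀ t ∈ Ι a b, |ρ t - c| ≤ δ) :
    |(∫ t in a..b, Φ t * ρ t) - c * ∫ t in a..b, Φ t| ≤ 2 * |b - a| * B * δ := by
  rcases eq_or_ne a b with rfl | hab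
  · simp
  have hmax : max a b ∈ Ι a b := ⟨min_lt_max.2 hab, le_rfl⟩
  have hB : 0 ≤ B := (abs_nonneg _).trans (hΦ _ hmax)
  have hδ : 0 ≤ δ := (abs_nonneg _).trans (hρc _ hmax)
  have of_bound : ∀ {g : ℝ → ℝ} {K : ℝ}, AEStronglyMeasurable g (volume.restrict (Ι a b)) →
      (∀ t ∈ Ι a b, |g t| ≤ K) → IntervalIntegrable g volume a b := fun hg hK =>
    intervalIntegrable_const.mono_fun' hg (ae_restrict_of_forall_mem measurableSet_uIoc hK)
  have hΦρ_le : ∀ t ∈ Ι a b, |Φ t * ρ t| ≤ B * (|c| + δ) := fun t ht => by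
    rw [abs_mul]
    gcongr
    · exact hΦ t ht
    · linarith [abs_sub_abs_le_abs_sub (ρ t) c, hρc t ht]
  by_cases hΦi : IntervalIntegrable Φ volume a b
  · have hΦρ : IntervalIntegrable (fun t => Φ t * ρ t) volume a b :=
      of_bound (hΦi.aestronglyMeasurable_restrict_uIoc.mul hρ.aestronglyMeasurable) hΦρ_le
    rw [← intervalIntegral.integral_const_mul, ← integral_sub hΦρ (hΦi.const_mul c)]
    calc |∫ t in a..b, Φ t * ρ t - c * Φ t| ≤ B * δ * |b - a| :=
        intervalIntegral.norm_integral_le_of_norm_le_const (f := fun t => Φ t * ρ t - c * Φ t)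
          fun t ht => by
            rw [Real.norm_eq_abs, mul_comm c, ← mul_sub, abs_mul]
            exact mul_le_mul (hΦ t ht) (by simpa only [abs_sub_comm] using hρc t ht)
              (abs_nonneg _) hB
      _ ≤ 2 * |b - a| * B * δ := by nlinarith [mul_nonneg (mul_nonneg hB hδ) (abs_nonneg (b - a))]
  rw [integral_undef hΦi, mul_zero, sub_zero]
  by_cases hΦρ : IntervalIntegrable (fun t => Φ t * ρ t) volume a b
  · -- otherwise `ρ` has no zero on the interval and `Φ = (Φ ρ) / ρ` would be integrable
    have hc : |c| ≤ δ := by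
      by_contra! hc
      have hρ0 : ∀ t ∈ Ι a b, ρ t ≠ 0 := fun t ht h0 => by
        have := hρc t ht
        rw [h0, zero_sub, abs_neg] at this
        linarith
      refine hΦi (of_bound ?_ hΦ)
      refine (hΦρ.aestronglyMeasurable_restrict_uIoc.mul hρ.inv.aestronglyMeasurable).congr ?_
      refine ae_restrict_of_forall_mem measurableSet_uIoc fun t ht => ?_
      simp [mul_assoc, mul_inv_cancel₀ (hρ0 t ht)]
    calc _ ≤ B * (|c| + δ) * |b - a| :=
        intervalIntegral.norm_integral_le_of_norm_le_const (f := fun t => Φ t * ρ t) hΦρ_le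
      _ ≤ 2 * |b - a| * B * δ := by nlinarith [mul_nonneg hB (abs_nonneg (b - a))]
  · rw [integral_undef hΦρ, abs_zero]
    positivity

theorem intervalIntegrable_mul_slope {u k : ℝ → ℝ} {M ε : ℝ} (hu : ContDiff ℝ 1 u)
    (hk : ∀ t, |k t| ≤ M) (x : ℝ) (hΦ : IntervalIntegrable (fun t => k t * |t|) volume (-ε) ε) :
    IntervalIntegrable (fun t => k t * ((u (x + t) - u x) / |t|)) volume (-ε) ε := by
  obtain ⟨K, hK⟩ := ((hu.comp ((contDiff_const (c := x)).add contDiff_id)).locallyLipschitz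
    |>.locallyLipschitzOn).exists_lipschitzOnWith_of_compact (isCompact_uIcc (a := -ε) (b := ε))
  have h0 : (0 : ℝ) ∈ uIcc (-ε) ε := by
    rcases le_total 0 ε with h | h <;> simp [h]
  have hslope : ∀ t ∈ Ι (-ε) ε, |u (x + t) - u x| / |t| ≤ K := fun t ht => by
    have := (lipschitzOnWith_iff_dist_le_mul.1 hK) t (uIoc_subset_uIcc ht) 0 h0
    simp only [Function.comp_apply, id, add_zero, Real.dist_eq, sub_zero] at this
    exact div_le_of_le_mul₀ (abs_nonneg _) K.2 this
  have hσ : Measurable fun t => (u (x + t) - u x) / t ^ 2 :=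
    ((hu.continuous.comp (continuous_const.add continuous_id)).sub continuous_const).measurable.div
      (measurable_id.pow_const 2)
  refine (intervalIntegrable_const (c := M * K)).mono_fun'
    ((hΦ.aestronglyMeasurable_restrict_uIoc.mul hσ.aestronglyMeasurable).congr
      (ae_of_all _ fun t => ?_)) (ae_restrict_of_forall_mem measurableSet_uIoc fun t ht => ?_)
  · rcases eq_or_ne t 0 with rfl | ht
    · simp
    · simp only [Pi.mul_apply]
      rw [← sq_abs t]
      field_simp
  · simp only [Real.norm_eq_abs, abs_mul, abs_div, abs_abs]
    exact mul_le_mul (hk t) (hslope t ht) (by positivity) ((abs_nonneg _).trans (hk t))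

theorem abs_two_mul_integral_mul_slope_sub_le {u k : ℝ → ℝ} {C₁ M ε : ℝ} (hu : ContDiff ℝ 4 u)
    (hC₁ : ∀ z, |iteratedDeriv 4 u z| ≤ C₁) (hk_even : ∀ t, k (-t) = k t) (hk : ∀ t, |k t| ≤ M)
    (hε : 0 < ε) (x : ℝ) :
    |2 * (∫ t in -ε..ε, k t * ((u (x + t) - u x) / |t|))
      - iteratedDeriv 2 u x * (∫ t in -ε..ε, k t * |t|)| ≤ M * C₁ * ε ^ 4 / 3 := by
  set c := iteratedDeriv 2 u x
  set F := fun t => k t * ((u (x + t) - u x) / |t|) with hF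
  set Φ := fun t => k t * |t| with hΦ
  set r := fun t => u (x + t) + u (x - t) - 2 * u x - c * t ^ 2 with hr
  have hM : 0 ≤ M := (abs_nonneg _).trans (hk 0)
  have hC₁0 : 0 ≤ C₁ := (abs_nonneg _).trans (hC₁ 0)
  have hI : ∀ t ∈ Ι (-ε) ε, |t| ≤ ε := fun t ht => by
    rw [uIoc_of_le (by linarith)] at ht
    exact abs_le.2 ⟨ht.1.le, ht.2⟩
  -- `c + r t / t ^ 2` is the second difference quotient for `t ≠ 0` and equals `c` at `t = 0`
  have hsym : ∀ t, F t + F (-t) = Φ t * (c + r t / t ^ 2) := fun t => by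
    rcases eq_or_ne t 0 with rfl | ht
    · simp [hF, hΦ]
    · simp only [hF, hΦ, hr, hk_even, abs_neg, ← sub_eq_add_neg]
      rw [← sq_abs t]
      field_simp
      ring
  have hρ : Measurable fun t => c + r t / t ^ 2 :=
    measurable_const.add ((by fun_prop : Continuous r).measurable.div (measurable_id.pow_const 2))
  have hΦB : ∀ t ∈ Ι (-ε) ε, |Φ t| ≤ M * ε := fun t ht => by
    rw [hΦ, abs_mul, abs_abs]
    exact mul_le_mul (hk t) (hI t ht) (abs_nonneg _) hM
  have hρc : ∀ t ∈ Ι (-ε) ε, |c + r t / t ^ 2 - c| ≤ C₁ * ε ^ 2 / 12 := fun t ht => by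
    rcases eq_or_ne t 0 with rfl | ht0
    · simp only [add_sub_cancel_left, zero_pow two_ne_zero, div_zero, abs_zero]
      positivity
    rw [add_sub_cancel_left, abs_div, abs_of_pos (by positivity : 0 < t ^ 2),
      div_le_iff₀ (by positivity)]
    calc |r t| ≤ C₁ * t ^ 4 / 12 := abs_add_sub_two_mul_sub_iteratedDeriv_two_le hu hC₁ x t
      _ ≤ C₁ * ε ^ 2 / 12 * t ^ 2 := by
        have : t ^ 2 ≤ ε ^ 2 := by rw [← sq_abs t]; gcongr; exact hI t ht
        nlinarith [mul_le_mul_of_nonneg_left this (mul_nonneg hC₁0 (sq_nonneg t))]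
  have hbound := abs_integral_mul_sub_mul_integral_le_s6 hρ hΦB hρc
  rw [abs_of_pos (by linarith : 0 < ε - -ε)] at hbound
  by_cases hFi : IntervalIntegrable F volume (-ε) ε
  · have hFneg : IntervalIntegrable (fun t => F (-t)) volume (-ε) ε := by
      simpa using ((IntervalIntegrable.iff_comp_neg).1 hFi).symm
    have h2F : 2 * ∫ t in -ε..ε, F t = ∫ t in -ε..ε, Φ t * (c + r t / t ^ 2) := by
      rw [← integral_congr fun t _ => hsym t, integral_add hFi hFneg, integral_comp_neg, neg_neg]
      ring
    rw [h2F]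
    convert hbound using 1
    ring
  · have hΦi : ¬ IntervalIntegrable Φ volume (-ε) ε := fun hΦi =>
      hFi (intervalIntegrable_mul_slope (hu.of_le (by norm_num)) hk x hΦi)
    rw [integral_undef hFi, integral_undef hΦi]
    simp only [mul_zero, sub_zero, abs_zero]
    positivity

theorem integral_kernel_mul_slope_eq (u J : ℝ → ℝ) (a x ε : ℝ) :
    ∫ y in (x - ε)..(x + ε), J (|y - x| / ε) * a * ((u y - u x) / |y - x|)
      = a * ∫ t in -ε..ε, J (|t| / ε) * ((u (x + t) - u x) / |t|) := by
  rw [← intervalIntegral.integral_const_mul, sub_eq_add_neg x ε, ← integral_comp_add_left]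
  refine integral_congr fun t _ => ?_
  simp only [add_sub_cancel_left]
  ring

theorem integral_kernel_mul_abs_eq (J : ℝ → ℝ) (a : ℝ) {ε : ℝ} (hε : 0 < ε) :
    ∫ z in (-1 : ℝ)..1, J |z| * a * |z| = a / ε ^ 2 * ∫ t in -ε..ε, J (|t| / ε) * |t| := by
  have hsubst := integral_comp_div (fun z => J |z| * a * |z|) hε.ne' (a := -ε) (b := ε)
  rw [neg_div, div_self hε.ne', smul_eq_mul] at hsubst
  have hrescale :
      ∫ t in -ε..ε, J |t / ε| * a * |t / ε| = a / ε * ∫ t in -ε..ε, J (|t| / ε) * |t| := by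
    rw [← intervalIntegral.integral_const_mul]
    refine integral_congr fun t _ => ?_
    simp only [abs_div, abs_of_pos hε]
    ring
  rw [← mul_right_inj' hε.ne', ← hsubst, hrescale]
  field_simp

theorem stmt_6_general (u J : ℝ → ℝ) (C₁ M f'0 : ℝ)
    (hu : ContDiff ℝ 4 u)
    (hC₁ : ∀ z, |iteratedDeriv 4 u z| ≤ C₁)
    (hJ0 : ∀ r, 0 ≤ J r) (hJM : ∀ r, J r ≤ M) :
    ∃ C > 0, ∀ (x : ℝ), ∀ ε > 0,
      abs ((2 / ε ^ 2) * (∫ y in (x - ε)..(x + ε),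
            J (|y - x| / ε) * f'0 * ((u y - u x) / |y - x|))
          - (∫ z in (-1 : ℝ)..1, J |z| * f'0 * |z|) * deriv (deriv u) x) ≤ C * ε ^ 2 := by
  have hM : 0 ≤ M := (hJ0 0).trans (hJM 0)
  have hC₁0 : 0 ≤ C₁ := (abs_nonneg _).trans (hC₁ 0)
  refine ⟨|f'0| * (M * C₁ / 3) + 1, by positivity, fun x ε hε => ?_⟩
  have hc : deriv (deriv u) x = iteratedDeriv 2 u x := by
    rw [iteratedDeriv_succ, iteratedDeriv_one]
  rw [integral_kernel_mul_slope_eq, integral_kernel_mul_abs_eq J f'0 hε, hc]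
  set I := ∫ t in -ε..ε, J (|t| / ε) * ((u (x + t) - u x) / |t|)
  set P := ∫ t in -ε..ε, J (|t| / ε) * |t|
  calc |2 / ε ^ 2 * (f'0 * I) - f'0 / ε ^ 2 * P * iteratedDeriv 2 u x|
      = |f'0 / ε ^ 2 * (2 * I - iteratedDeriv 2 u x * P)| := by congr 1; ring
    _ = |f'0| / ε ^ 2 * |2 * I - iteratedDeriv 2 u x * P| := by
        rw [abs_mul, abs_div, abs_of_pos (pow_pos hε 2)]
    _ ≤ |f'0| / ε ^ 2 * (M * C₁ * ε ^ 4 / 3) := by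
        gcongr
        exact abs_two_mul_integral_mul_slope_sub_le hu hC₁ (fun t => by simp)
          (fun t => abs_le.2 ⟨by linarith [hJ0 (|t| / ε)], hJM _⟩) hε x
    _ = |f'0| * (M * C₁ / 3) * ε ^ 2 := by field_simp
    _ ≤ (|f'0| * (M * C₁ / 3) + 1) * ε ^ 2 := by gcongr; linarith

/-- For `u ∈ C⁴` with `|u''''| ≤ C₁`, there is a constant `C` (depending only
on `C₁`, `M`, `f'(0)`) such that for all `x` and all `ε > 0`, the linearized peridynamic
force is within `C ε²` of the local elastic force `𝔽 u''(x)`: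
`|(2/ε²)∫_{x-ε}^{x+ε} J(|y-x|/ε) f'(0) S(y,x;u) dy - 𝔽 u''(x)| ≤ C ε²`,
where `𝔽 = ∫_{-1}^1 J(|z|) f'(0) |z| dz` and `S(y,x;u) = (u y - u x)/|y-x|`. -/
theorem stmt_6 (u J : ℝ → ℝ) (C₁ M f'0 : ℝ) (hf'0 : 0 < f'0)
    (hu : ContDiff ℝ 4 u)
    (hC₁ : ∀ z, |iteratedDeriv 4 u z| ≤ C₁)
    (hJ0 : ∀ r, 0 ≤ J r) (hJM : ∀ r, J r ≤ M)
    (hJsupp : ∀ r, r ∉ Set.Icc (0 : ℝ) 1 → J r = 0) :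
    ∃ C > 0, ∀ (x : ℝ), ∀ ε > 0,
      abs ((2 / ε ^ 2) * (∫ y in (x - ε)..(x + ε),
            J (|y - x| / ε) * f'0 * ((u y - u x) / |y - x|))
          - (∫ z in (-1 : ℝ)..1, J |z| * f'0 * |z|) * deriv (deriv u) x) ≤ C * ε ^ 2 :=
  stmt_6_general u J C₁ M f'0 hu hC₁ hJ0 hJM
end

section
/- Let e : [0,T] × D → ℝ be C² in time with e(0,x) = 0, ė(0,x) = 0, e(t,·) = 0 on the boundary, and suppose ρ ë(t,x) = 𝔽 e_{xx}(t,x) + F(t,x) with sup_{(x,t)} |F(t,x)| ≤ C₃ε. Then the energy E(t) = (1/2)∫_D ρ|ė(t,x)|² dx + (1/2)∫_D 𝔽|e_x(t,x)|² dx satisfies E'(t) = ∫_D F·ė dx ≤ C₃ε√(|D|)·√(2E(t)/ρ), and consequently by Gronwall's inequality sup_{t∈[0,T]} E(t) ≤ C₂ε² for a constant C₂ depending only on C₃, ρ, |D|, and T. -/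
/-!
Write `u = ∂ₜe` and `w = ∂ₓe`; these satisfy `ρ ∂ₜu = Fc ∂ₓw + F` and `∂ₜw = ∂ₓu`. Differentiating
the energy under the integral sign and integrating `Fc ∂ₓ(w u)` by parts, the boundary terms
vanish because `e` and hence `u` vanish at both ends, so `E' = ∫ F u`. Cauchy–Schwarz together
with `|F| ≤ C₃ ε` gives `E' ≤ M √E` with `M = C₃ ε √(b - a) √(2 / ρ)`, and since `E(0) = 0` a
comparison argument yields `E(t) ≤ (M t / 2)²`, which is of order `ε²`.
-/

open Set Function MeasureTheory Filter Topology Metric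

-- Derivatives of slices, so that these unfold definitionally to the `deriv` terms of `stmt_16`.
noncomputable def partialFst (e : ℝ → ℝ → ℝ) (t x : ℝ) : ℝ := deriv (fun s => e s x) t

noncomputable def partialSnd (e : ℝ → ℝ → ℝ) (t x : ℝ) : ℝ := deriv (fun y => e t y) x

section PartialDerivatives

variable {e : ℝ → ℝ → ℝ} {t x : ℝ}

theorem hasDerivAt_slice_fst (he : DifferentiableAt ℝ (uncurry e) (t, x)) :
    HasDerivAt (fun s => e s x) (fderiv ℝ (uncurry e) (t, x) (1, 0)) t := by
  exact he.hasFDerivAt.comp_hasDerivAt t ((hasDerivAt_id t).prodMk (hasDerivAt_const t x))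

theorem hasDerivAt_slice_snd (he : DifferentiableAt ℝ (uncurry e) (t, x)) :
    HasDerivAt (fun y => e t y) (fderiv ℝ (uncurry e) (t, x) (0, 1)) x := by
  exact he.hasFDerivAt.comp_hasDerivAt x ((hasDerivAt_const x t).prodMk (hasDerivAt_id x))

theorem partialFst_eq_fderiv (he : DifferentiableAt ℝ (uncurry e) (t, x)) :
    partialFst e t x = fderiv ℝ (uncurry e) (t, x) (1, 0) :=
  (hasDerivAt_slice_fst he).deriv

theorem partialSnd_eq_fderiv (he : DifferentiableAt ℝ (uncurry e) (t, x)) :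
    partialSnd e t x = fderiv ℝ (uncurry e) (t, x) (0, 1) :=
  (hasDerivAt_slice_snd he).deriv

theorem hasDerivAt_partialFst (he : DifferentiableAt ℝ (uncurry e) (t, x)) :
    HasDerivAt (fun s => e s x) (partialFst e t x) t :=
  partialFst_eq_fderiv he ▸ hasDerivAt_slice_fst he

theorem hasDerivAt_partialSnd (he : DifferentiableAt ℝ (uncurry e) (t, x)) :
    HasDerivAt (fun y => e t y) (partialSnd e t x) x :=
  partialSnd_eq_fderiv he ▸ hasDerivAt_slice_snd he

theorem uncurry_partialFst (he : Differentiable ℝ (uncurry e)) :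
    uncurry (partialFst e) = fun p => fderiv ℝ (uncurry e) p (1, 0) :=
  funext fun p => partialFst_eq_fderiv (he p)

theorem uncurry_partialSnd (he : Differentiable ℝ (uncurry e)) :
    uncurry (partialSnd e) = fun p => fderiv ℝ (uncurry e) p (0, 1) :=
  funext fun p => partialSnd_eq_fderiv (he p)

variable {m n : WithTop ℕ∞}

theorem contDiff_partialFst (he : ContDiff ℝ n (uncurry e)) (hmn : m + 1 ≤ n) :
    ContDiff ℝ m (uncurry (partialFst e)) := by
  rw [uncurry_partialFst (he.differentiable (by rintro rfl; simp at hmn))]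
  exact (he.fderiv_right hmn).clm_apply contDiff_const

theorem contDiff_partialSnd (he : ContDiff ℝ n (uncurry e)) (hmn : m + 1 ≤ n) :
    ContDiff ℝ m (uncurry (partialSnd e)) := by
  rw [uncurry_partialSnd (he.differentiable (by rintro rfl; simp at hmn))]
  exact (he.fderiv_right hmn).clm_apply contDiff_const

theorem partialSnd_partialFst (he : ContDiff ℝ 2 (uncurry e)) :
    partialSnd (partialFst e) = partialFst (partialSnd e) := by
  have hd : Differentiable ℝ (uncurry e) := he.differentiable (by norm_num)
  have hd2 : Differentiable ℝ (fderiv ℝ (uncurry e)) :=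
    (he.fderiv_right (m := 1) (by norm_num)).differentiable (by norm_num)
  ext t x
  have hs : IsSymmSndFDerivAt ℝ (uncurry e) (t, x) :=
    he.contDiffAt.isSymmSndFDerivAt (by simp)
  rw [partialSnd_eq_fderiv, partialFst_eq_fderiv, uncurry_partialFst hd, uncurry_partialSnd hd,
    fderiv_clm_apply (hd2 _) (differentiableAt_const _),
    fderiv_clm_apply (hd2 _) (differentiableAt_const _)]
  · simpa using hs (0, 1) (1, 0)
  · exact (contDiff_partialSnd he (m := 1) (by norm_num)).differentiable (by norm_num) _
  · exact (contDiff_partialFst he (m := 1) (by norm_num)).differentiable (by norm_num) _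

end PartialDerivatives

theorem HasDerivAt.eq_zero_of_eqOn_Icc {f : ℝ → ℝ} {f' c d t : ℝ} (hf : HasDerivAt f f' t)
    (hcd : c < d) (ht : t ∈ Icc c d) (h0 : EqOn f 0 (Icc c d)) : f' = 0 :=
  (uniqueDiffOn_Icc hcd t ht).eq_deriv _ hf.hasDerivWithinAt
    ((hasDerivWithinAt_const t _ 0).congr h0 (h0 ht))

theorem partialFst_eq_zero_of_eqOn_zero {e : ℝ → ℝ → ℝ} {T x : ℝ}
    (he : Differentiable ℝ (uncurry e)) (h0 : partialFst e 0 x = 0)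
    (hx : ∀ s ∈ Icc 0 T, e s x = 0) : ∀ t ∈ Icc 0 T, partialFst e t x = 0 := by
  intro t ht
  rcases ht.1.eq_or_lt with rfl | hpos
  · exact h0
  · exact (hasDerivAt_partialFst (he _)).eq_zero_of_eqOn_Icc hpos ⟨hpos.le, le_rfl⟩
      fun s hs => hx s ⟨hs.1, hs.2.trans ht.2⟩

theorem hasDerivAt_intervalIntegral_of_continuous {g g' : ℝ → ℝ → ℝ}
    (hg : Continuous (uncurry g)) (hg' : Continuous (uncurry g'))
    (hd : ∀ s x, HasDerivAt (fun s => g s x) (g' s x) s) (a b t : ℝ) :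
    HasDerivAt (fun s => ∫ x in a..b, g s x) (∫ x in a..b, g' t x) t := by
  obtain ⟨M, hM⟩ := (isCompact_closedBall t 1 |>.prod isCompact_uIcc).exists_bound_of_continuousOn
    hg'.continuousOn
  exact (intervalIntegral.hasDerivAt_integral_of_dominated_loc_of_deriv_le (bound := fun _ => M)
    (ball_mem_nhds t one_pos)
    (Eventually.of_forall fun s => (hg.uncurry_left s).aestronglyMeasurable)
    ((hg.uncurry_left t).intervalIntegrable a b)
    (hg'.uncurry_left t).aestronglyMeasurable
    (Eventually.of_forall fun x hx s hs =>
      hM (s, x) ⟨ball_subset_closedBall hs, uIoc_subset_uIcc hx⟩)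
    intervalIntegrable_const
    (Eventually.of_forall fun x _ s _ => hd s x)).2

/-- The quadratic `l ↦ ∫ (l g - f)²` is nonnegative, so its discriminant is nonpositive. -/
theorem sq_integral_mul_le {α : Type*} [MeasurableSpace α] {μ : Measure α} {f g : α → ℝ}
    (hf : Integrable (fun x => f x ^ 2) μ) (hg : Integrable (fun x => g x ^ 2) μ)
    (hfg : Integrable (fun x => f x * g x) μ) :
    (∫ x, f x * g x ∂μ) ^ 2 ≤ (∫ x, f x ^ 2 ∂μ) * ∫ x, g x ^ 2 ∂μ := by
  have hquad (l : ℝ) :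
      0 ≤ (∫ x, g x ^ 2 ∂μ) * (l * l) + -2 * (∫ x, f x * g x ∂μ) * l + ∫ x, f x ^ 2 ∂μ := by
    have hrest : Integrable (fun x => -2 * l * (f x * g x) + f x ^ 2) μ :=
      (hfg.const_mul _).add hf
    calc 0 ≤ ∫ x, (l * g x - f x) ^ 2 ∂μ := integral_nonneg fun x => sq_nonneg _
      _ = ∫ x, (l * l * g x ^ 2 + (-2 * l * (f x * g x) + f x ^ 2)) ∂μ :=
        integral_congr_ae (ae_of_all _ fun x => by ring)
      _ = _ := by
        rw [integral_add (hg.const_mul _) hrest, integral_add (hfg.const_mul _) hf,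
          integral_const_mul, integral_const_mul]
        ring
  have := discrim_le_zero hquad
  rw [discrim] at this
  nlinarith

theorem intervalIntegral.integral_mul_le_sqrt_mul_sqrt {f g : ℝ → ℝ} {a b : ℝ} (hab : a ≤ b)
    (hf : Continuous f) (hg : Continuous g) :
    ∫ x in a..b, f x * g x ≤ √(∫ x in a..b, f x ^ 2) * √(∫ x in a..b, g x ^ 2) := by
  simp only [intervalIntegral.integral_of_le hab]
  rw [← Real.sqrt_mul (MeasureTheory.integral_nonneg fun x => sq_nonneg _)]
  exact (le_abs_self _).trans <| Real.abs_le_sqrt <| sq_integral_mul_le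
    ((hf.pow 2).intervalIntegrable a b).1 ((hg.pow 2).intervalIntegrable a b).1
    ((hf.mul hg).intervalIntegrable a b).1

/-- Compare `f` with the barriers `B = ((M + δ) t / 2 + δ)²`, which satisfy
`B' = (M + δ) √B > M √B`, and let `δ → 0`. -/
theorem le_sq_of_hasDerivAt_le_mul_sqrt {f f' : ℝ → ℝ} {M T : ℝ} (hM : 0 ≤ M)
    (hf : ∀ t ∈ Icc 0 T, HasDerivAt f (f' t) t) (hf' : ∀ t ∈ Icc 0 T, f' t ≤ M * √(f t))
    (h0 : f 0 = 0) : ∀ t ∈ Icc 0 T, f t ≤ (M * t / 2) ^ 2 := by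
  intro t ht
  have hbarrier : ∀ δ > 0, f t ≤ ((M + δ) * t / 2 + δ) ^ 2 := by
    intro δ hδ
    have hB : ∀ s, HasDerivAt (fun s => ((M + δ) * s / 2 + δ) ^ 2)
        ((M + δ) * ((M + δ) * s / 2 + δ)) s := fun s =>
      ((((hasDerivAt_id s).const_mul (M + δ)).div_const 2).add_const δ).pow 2 |>.congr_deriv
        (by simp only [id]; ring)
    refine image_le_of_deriv_right_lt_deriv_boundary
      (fun s hs => (hf s hs).continuousAt.continuousWithinAt)
      (fun s hs => (hf s (Ico_subset_Icc_self hs)).hasDerivWithinAt)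
      (by rw [h0]; positivity) hB (fun s hs hfs => ?_) ht
    have hpos : 0 < (M + δ) * s / 2 + δ := by have := hs.1; positivity
    calc f' s ≤ M * √(f s) := hf' s (Ico_subset_Icc_self hs)
      _ = M * ((M + δ) * s / 2 + δ) := by rw [hfs, Real.sqrt_sq hpos.le]
      _ < (M + δ) * ((M + δ) * s / 2 + δ) := by gcongr; linarith
  have hlim : Tendsto (fun δ => ((M + δ) * t / 2 + δ) ^ 2) (𝓝[>] 0) (𝓝 ((M * t / 2) ^ 2)) := by
    have : Continuous fun δ => ((M + δ) * t / 2 + δ) ^ 2 := by fun_prop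
    simpa using (this.tendsto 0).mono_left nhdsWithin_le_nhds
  exact ge_of_tendsto hlim (eventually_nhdsWithin_of_forall hbarrier)

noncomputable def waveEnergy (ρ Fc a b : ℝ) (u w : ℝ → ℝ → ℝ) (t : ℝ) : ℝ :=
  (1 / 2) * (∫ x in a..b, ρ * u t x ^ 2) + (1 / 2) * (∫ x in a..b, Fc * w t x ^ 2)

section WaveEnergy

variable {ρ Fc a b t : ℝ} {u w F : ℝ → ℝ → ℝ}

theorem hasDerivAt_waveEnergy (hu : ContDiff ℝ 1 (uncurry u)) (hw : ContDiff ℝ 1 (uncurry w)) :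
    HasDerivAt (waveEnergy ρ Fc a b u w)
      (∫ x in a..b, (ρ * u t x * partialFst u t x + Fc * w t x * partialFst w t x)) t := by
  have hu' := hu.differentiable one_ne_zero
  have hw' := hw.differentiable one_ne_zero
  have cu := hu.continuous
  have cw := hw.continuous
  have cut := (contDiff_partialFst hu (m := 0) (by simp)).continuous
  have cwt := (contDiff_partialFst hw (m := 0) (by simp)).continuous
  have hkin := hasDerivAt_intervalIntegral_of_continuous
    (g := fun s x => ρ * u s x ^ 2) (g' := fun s x => 2 * (ρ * u s x * partialFst u s x))
    (by fun_prop) (by fun_prop)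
    (fun s x => (((hasDerivAt_partialFst (hu' _)).pow 2).const_mul ρ).congr_deriv (by ring)) a b t
  have hpot := hasDerivAt_intervalIntegral_of_continuous
    (g := fun s x => Fc * w s x ^ 2) (g' := fun s x => 2 * (Fc * w s x * partialFst w s x))
    (by fun_prop) (by fun_prop)
    (fun s x => (((hasDerivAt_partialFst (hw' _)).pow 2).const_mul Fc).congr_deriv (by ring)) a b t
  refine ((hkin.const_mul (1 / 2)).add (hpot.const_mul (1 / 2))).congr_deriv ?_
  have := cut.uncurry_left t
  have := cwt.uncurry_left t
  have := cu.uncurry_left t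
  have := cw.uncurry_left t
  rw [intervalIntegral.integral_add (Continuous.intervalIntegrable (by fun_prop) a b)
    (Continuous.intervalIntegrable (by fun_prop) a b), intervalIntegral.integral_const_mul,
    intervalIntegral.integral_const_mul]
  ring

/-- Substituting the equation and `∂ₜw = ∂ₓu` turns the power into `∫ F u + Fc ∫ ∂ₓ(w u)`, and
the last integral vanishes because `u` does at both ends. -/
theorem hasDerivAt_waveEnergy_of_wave_eq (hu : ContDiff ℝ 1 (uncurry u))
    (hw : ContDiff ℝ 1 (uncurry w)) (hF : Continuous (uncurry F))
    (hcompat : ∀ x, partialSnd u t x = partialFst w t x)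
    (hwave : ∀ x ∈ uIcc a b, ρ * partialFst u t x = Fc * partialSnd w t x + F t x)
    (ha : u t a = 0) (hb : u t b = 0) :
    HasDerivAt (waveEnergy ρ Fc a b u w) (∫ x in a..b, F t x * u t x) t := by
  refine (hasDerivAt_waveEnergy hu hw).congr_deriv ?_
  have hu' := hu.differentiable one_ne_zero
  have hw' := hw.differentiable one_ne_zero
  have := hF.uncurry_left t
  have := hu.continuous.uncurry_left t
  have := hw.continuous.uncurry_left t
  have := (contDiff_partialSnd hu (m := 0) (by simp)).continuous.uncurry_left t
  have := (contDiff_partialSnd hw (m := 0) (by simp)).continuous.uncurry_left t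
  have hflux : ∫ x in a..b, Fc * (partialSnd w t x * u t x + w t x * partialSnd u t x) = 0 := by
    rw [intervalIntegral.integral_eq_sub_of_hasDerivAt (f := fun x => Fc * (w t x * u t x))
      (fun x _ =>
        ((hasDerivAt_partialSnd (hw' _)).mul (hasDerivAt_partialSnd (hu' _))).const_mul Fc)
      (Continuous.intervalIntegrable (by fun_prop) a b), ha, hb]
    ring
  calc ∫ x in a..b, (ρ * u t x * partialFst u t x + Fc * w t x * partialFst w t x)
      = ∫ x in a..b, (F t x * u t x
          + Fc * (partialSnd w t x * u t x + w t x * partialSnd u t x)) :=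
        intervalIntegral.integral_congr fun x hx => by
          rw [hcompat]
          linear_combination u t x * hwave x hx
    _ = ∫ x in a..b, F t x * u t x := by
        rw [intervalIntegral.integral_add (Continuous.intervalIntegrable (by fun_prop) a b)
          (Continuous.intervalIntegrable (by fun_prop) a b), hflux, add_zero]

theorem waveEnergy_eq_zero (hu : ∀ x ∈ uIcc a b, u t x = 0)
    (hw : ∀ x ∈ uIcc a b, w t x = 0) : waveEnergy ρ Fc a b u w t = 0 := by
  have hzero (c : ℝ) (v : ℝ → ℝ → ℝ) (hv : ∀ x ∈ uIcc a b, v t x = 0) :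
      ∫ x in a..b, c * v t x ^ 2 = 0 := by
    rw [intervalIntegral.integral_congr (g := fun _ => 0) fun x hx => by simp [hv x hx]]
    simp
  rw [waveEnergy, hzero ρ u hu, hzero Fc w hw]
  ring

theorem integral_mul_le_sqrt_waveEnergy {K : ℝ} (hρ : 0 < ρ) (hFc : 0 ≤ Fc) (hab : a ≤ b)
    (hu : Continuous (u t)) (hF : Continuous (F t)) (hFK : ∀ x ∈ Icc a b, |F t x| ≤ K) :
    ∫ x in a..b, F t x * u t x ≤ K * √(b - a) * √(2 * waveEnergy ρ Fc a b u w t / ρ) := by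
  have hK : 0 ≤ K := (abs_nonneg _).trans (hFK a ⟨le_rfl, hab⟩)
  have hF2 : ∫ x in a..b, F t x ^ 2 ≤ K ^ 2 * (b - a) := by
    calc ∫ x in a..b, F t x ^ 2 ≤ ∫ x in a..b, K ^ 2 :=
          intervalIntegral.integral_mono_on hab ((hF.pow 2).intervalIntegrable a b)
            intervalIntegrable_const fun x hx =>
              sq_le_sq.2 <| (hFK x hx).trans_eq (abs_of_nonneg hK).symm
      _ = K ^ 2 * (b - a) := by simp [mul_comm]
  have hu2 : ∫ x in a..b, u t x ^ 2 ≤ 2 * waveEnergy ρ Fc a b u w t / ρ := by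
    have hpot : 0 ≤ ∫ x in a..b, Fc * w t x ^ 2 :=
      intervalIntegral.integral_nonneg hab fun x _ => by positivity
    rw [le_div_iff₀ hρ, waveEnergy, intervalIntegral.integral_const_mul]
    linarith
  calc ∫ x in a..b, F t x * u t x ≤ √(∫ x in a..b, F t x ^ 2) * √(∫ x in a..b, u t x ^ 2) :=
        intervalIntegral.integral_mul_le_sqrt_mul_sqrt hab hF hu
    _ ≤ √(K ^ 2 * (b - a)) * √(2 * waveEnergy ρ Fc a b u w t / ρ) := by gcongr
    _ = K * √(b - a) * √(2 * waveEnergy ρ Fc a b u w t / ρ) := by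
        rw [Real.sqrt_mul (sq_nonneg K), Real.sqrt_sq hK]

end WaveEnergy

theorem stmt_16_general (ρ Fc a b T C₃ : ℝ) (hρ : 0 < ρ) (hFc : 0 < Fc) (hab : a < b)
    (hC₃ : 0 ≤ C₃) :
    ∃ C₂ > 0, ∀ ε > 0, ∀ e F : ℝ → ℝ → ℝ,
      ContDiff ℝ 2 (fun p : ℝ × ℝ => e p.1 p.2) →
      Continuous (fun p : ℝ × ℝ => F p.1 p.2) →
      (∀ t ∈ Set.Icc 0 T, ∀ x ∈ Set.Icc a b,
        ρ * deriv (deriv (fun s => e s x)) t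
          = Fc * deriv (deriv (fun y => e t y)) x + F t x) →
      (∀ x ∈ Set.Icc a b, e 0 x = 0) →
      (∀ x ∈ Set.Icc a b, deriv (fun s => e s x) 0 = 0) →
      (∀ t ∈ Set.Icc 0 T, e t a = 0 ∧ e t b = 0) →
      (∀ t ∈ Set.Icc 0 T, ∀ x ∈ Set.Icc a b, |F t x| ≤ C₃ * ε) →
      ∀ t ∈ Set.Icc 0 T,
        (HasDerivAt
          (fun s => (1 / 2) * (∫ x in a..b, ρ * (deriv (fun r => e r x) s) ^ 2)
            + (1 / 2) * (∫ x in a..b, Fc * (deriv (fun y => e s y) x) ^ 2))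
          (∫ x in a..b, F t x * deriv (fun r => e r x) t) t) ∧
        ((∫ x in a..b, F t x * deriv (fun r => e r x) t)
          ≤ C₃ * ε * Real.sqrt (b - a) *
            Real.sqrt (2 * ((1 / 2) * (∫ x in a..b, ρ * (deriv (fun r => e r x) t) ^ 2)
              + (1 / 2) * (∫ x in a..b, Fc * (deriv (fun y => e t y) x) ^ 2)) / ρ)) ∧
        ((1 / 2) * (∫ x in a..b, ρ * (deriv (fun r => e r x) t) ^ 2)
            + (1 / 2) * (∫ x in a..b, Fc * (deriv (fun y => e t y) x) ^ 2)
          ≤ C₂ * ε ^ 2) := by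
  refine ⟨(C₃ * √(b - a) * √(2 / ρ) * T / 2) ^ 2 + 1, by positivity, ?_⟩
  intro ε hε e F he hF hpde he0 hv0 hbc hFb
  set E := waveEnergy ρ Fc a b (partialFst e) (partialSnd e)
  have hd : Differentiable ℝ (uncurry e) := he.differentiable (by norm_num)
  have huIcc : uIcc a b = Icc a b := uIcc_of_le hab.le
  have hE' : ∀ t ∈ Icc 0 T, HasDerivAt E (∫ x in a..b, F t x * partialFst e t x) t :=
    fun t ht => hasDerivAt_waveEnergy_of_wave_eq (contDiff_partialFst he (by norm_num))
      (contDiff_partialSnd he (by norm_num)) hF (congrFun₂ (partialSnd_partialFst he) t)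
      (fun x hx => hpde t ht x (huIcc ▸ hx))
      (partialFst_eq_zero_of_eqOn_zero hd (hv0 a ⟨le_rfl, hab.le⟩) (fun s hs => (hbc s hs).1) t ht)
      (partialFst_eq_zero_of_eqOn_zero hd (hv0 b ⟨hab.le, le_rfl⟩) (fun s hs => (hbc s hs).2) t ht)
  have hbound : ∀ t ∈ Icc 0 T,
      ∫ x in a..b, F t x * partialFst e t x ≤ C₃ * ε * √(b - a) * √(2 * E t / ρ) :=
    fun t ht => integral_mul_le_sqrt_waveEnergy hρ hFc.le hab.le
      ((contDiff_partialFst he (m := 0) (by norm_num)).continuous.uncurry_left t)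
      (hF.uncurry_left t) (hFb t ht)
  have hE0 : E 0 = 0 := waveEnergy_eq_zero (fun x hx => hv0 x (huIcc ▸ hx)) fun x hx =>
    (hasDerivAt_partialSnd (hd _)).eq_zero_of_eqOn_Icc hab (huIcc ▸ hx) he0
  set M := C₃ * ε * √(b - a) * √(2 / ρ)
  have hgronwall := le_sq_of_hasDerivAt_le_mul_sqrt (M := M) (by positivity) hE'
    (fun t ht => (hbound t ht).trans_eq (by
      rw [mul_div_right_comm, Real.sqrt_mul (by positivity)]; ring)) hE0
  intro t ht
  refine ⟨hE' t ht, hbound t ht, ?_⟩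
  calc E t ≤ (M * t / 2) ^ 2 := hgronwall t ht
    _ ≤ (M * T / 2) ^ 2 := by have := ht.1; gcongr; exact ht.2
    _ = (C₃ * √(b - a) * √(2 / ρ) * T / 2) ^ 2 * ε ^ 2 := by ring
    _ ≤ ((C₃ * √(b - a) * √(2 / ρ) * T / 2) ^ 2 + 1) * ε ^ 2 := by gcongr; linarith

/-- Let `e : [0,T] × [a,b] → ℝ` be `C²` with zero initial data, zero
boundary data, and `ρ ë = 𝔽 e_{xx} + F` with `|F| ≤ C₃ ε`. Then the energy
`E(t) = (1/2)∫ ρ|ė|² + (1/2)∫ 𝔽|e_x|²` satisfies `E'(t) = ∫ F ė ≤ C₃ ε √(b-a) √(2E/ρ)`,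
and by Gronwall `sup_{t∈[0,T]} E(t) ≤ C₂ ε²` with `C₂` depending only on
`C₃, ρ, |D| = b - a, T`. -/
theorem stmt_16 (ρ Fc a b T C₃ : ℝ) (hρ : 0 < ρ) (hFc : 0 < Fc) (hab : a < b)
    (hT : 0 ≤ T) (hC₃ : 0 ≤ C₃) :
    ∃ C₂ > 0, ∀ ε > 0, ∀ e F : ℝ → ℝ → ℝ,
      ContDiff ℝ 2 (fun p : ℝ × ℝ => e p.1 p.2) →
      Continuous (fun p : ℝ × ℝ => F p.1 p.2) →
      (∀ t ∈ Set.Icc 0 T, ∀ x ∈ Set.Icc a b,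
        ρ * deriv (deriv (fun s => e s x)) t
          = Fc * deriv (deriv (fun y => e t y)) x + F t x) →
      (∀ x ∈ Set.Icc a b, e 0 x = 0) →
      (∀ x ∈ Set.Icc a b, deriv (fun s => e s x) 0 = 0) →
      (∀ t ∈ Set.Icc 0 T, e t a = 0 ∧ e t b = 0) →
      (∀ t ∈ Set.Icc 0 T, ∀ x ∈ Set.Icc a b, |F t x| ≤ C₃ * ε) →
      ∀ t ∈ Set.Icc 0 T,
        (HasDerivAt
          (fun s => (1 / 2) * (∫ x in a..b, ρ * (deriv (fun r => e r x) s) ^ 2)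
            + (1 / 2) * (∫ x in a..b, Fc * (deriv (fun y => e s y) x) ^ 2))
          (∫ x in a..b, F t x * deriv (fun r => e r x) t) t) ∧
        ((∫ x in a..b, F t x * deriv (fun r => e r x) t)
          ≤ C₃ * ε * Real.sqrt (b - a) *
            Real.sqrt (2 * ((1 / 2) * (∫ x in a..b, ρ * (deriv (fun r => e r x) t) ^ 2)
              + (1 / 2) * (∫ x in a..b, Fc * (deriv (fun y => e t y) x) ^ 2)) / ρ)) ∧
        ((1 / 2) * (∫ x in a..b, ρ * (deriv (fun r => e r x) t) ^ 2)
            + (1 / 2) * (∫ x in a..b, Fc * (deriv (fun y => e t y) x) ^ 2)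
          ≤ C₂ * ε ^ 2) :=
  stmt_16_general ρ Fc a b T C₃ hρ hFc hab hC₃
end
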